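/- Let S be an optimal feasible capacity installation of cost at most (M+2)·m + 8p for the constructed two-color f-SAND instance, with an associated routing in which the flow of each color induces no directed cycles and every terminal's path contains exactly one node of ∪_{i=1}^p {y_i^1, y_i^3, y_i^5, y_i^7}. For i ∈ [p], let G_i be the subgraph of G induced by {r, y_i^1, …, y_i^7}, let χ_i be the total cost of the capacity S installs on edges of G_i, and let n_i be the number of clause nodes k_j whose path P_1^j uses edges of G_i. Then χ_i ≥ 8 + 2·n_i, and the inequality is strict whenever the variable x_i is in conflict (i.e., some k_j routes flow to r on paths whose first edge has endpoint y_i^4 while some other k_{j'} routes flow to r on paths whose first edge has endpoint y_i^2 or y_i^6). -/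

import Mathlib

open scoped Classical
open Finset

namespace FSand

variable {V : Type} [Fintype V] [DecidableEq V]

/-- An edge crosses the cut `(S, Sᶜ)`. -/
def Crossing (S : Finset V) (e : Sym2 V) : Prop :=
  ∃ u v, e = s(u, v) ∧ u ∈ S ∧ v ∉ S

/-- Total capacity installed on edges crossing the cut `(S, Sᶜ)`. -/
noncomputable def cutCap (x : Sym2 V → ℕ) (S : Finset V) : ℕ :=
  ∑ e ∈ Finset.univ.filter (Crossing S), x e

/-- Feasibility of a capacity installation for the f-SAND instance `(G, r, C)`. -/
def Feasible {ι : Type} (G : SimpleGraph V) (r : V) (C : ι → Finset V)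
    (x : Sym2 V → ℕ) : Prop :=
  (∀ e, e ∉ G.edgeSet → x e = 0) ∧
  ∀ S : Finset V, r ∉ S → ∀ i : ι, (C i ∩ S).card ≤ cutCap x S

/-- Cost of a capacity installation. -/
noncomputable def instCost (w : Sym2 V → ℝ) (x : Sym2 V → ℕ) : ℝ :=
  ∑ e : Sym2 V, w e * (x e : ℝ)

end FSand

namespace SandSat

/-- Vertices of the reduction graph: the root, one node `k_j` per clause, and seven
nodes `y_i^1, …, y_i^7` per variable (indexed here by `Fin 7`, so `y_i^ℓ` has index
`ℓ - 1`). -/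
abbrev SandV (m p : ℕ) := Option (Fin m ⊕ (Fin p × Fin 7))

variable {m p : ℕ}

/-- The root. -/
def rt : SandV m p := none
/-- The clause node `k_j`. -/
def kv (j : Fin m) : SandV m p := some (Sum.inl j)
/-- The variable node `y_i^{ℓ+1}`. -/
def yv (i : Fin p) (ℓ : Fin 7) : SandV m p := some (Sum.inr (i, ℓ))

/-- The SAT formula, given by the clause indices `i1 i, i2 i` of the two positive
occurrences and `i3 i` of the negated occurrence of each variable `x_i`, is
satisfiable. -/
def Satisfiable (i1 i2 i3 : Fin p → Fin m) : Prop :=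
  ∃ a : Fin p → Bool, ∀ j : Fin m,
    (∃ i, (i1 i = j ∨ i2 i = j) ∧ a i = true) ∨ (∃ i, i3 i = j ∧ a i = false)

/-- The edges `{r, y_i^1}, {r, y_i^3}, {r, y_i^5}, {r, y_i^7}` (cost 2). -/
def RootEdge (e : Sym2 (SandV m p)) : Prop :=
  ∃ i, e = s(rt, yv i 0) ∨ e = s(rt, yv i 2) ∨ e = s(rt, yv i 4) ∨ e = s(rt, yv i 6)

/-- The edges `{y_i^ℓ, y_i^{ℓ+1}}`, `ℓ = 1, …, 6` (cost 1). -/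
def PathEdge (e : Sym2 (SandV m p)) : Prop :=
  ∃ i, e = s(yv i 0, yv i 1) ∨ e = s(yv i 1, yv i 2) ∨ e = s(yv i 2, yv i 3) ∨
    e = s(yv i 3, yv i 4) ∨ e = s(yv i 4, yv i 5) ∨ e = s(yv i 5, yv i 6)

/-- The edges `{y_i^2, k_{i_1}}, {y_i^4, k_{i_3}}, {y_i^6, k_{i_2}}` (cost `M`). -/
def CrossEdge (i1 i2 i3 : Fin p → Fin m) (e : Sym2 (SandV m p)) : Prop :=
  ∃ i, e = s(yv i 1, kv (i1 i)) ∨ e = s(yv i 3, kv (i3 i)) ∨ e = s(yv i 5, kv (i2 i))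

/-- The reduction graph. -/
def sandG (i1 i2 i3 : Fin p → Fin m) : SimpleGraph (SandV m p) :=
  SimpleGraph.fromEdgeSet
    {e | RootEdge e ∨ PathEdge e ∨ CrossEdge i1 i2 i3 e}

/-- The edge costs of the reduction graph. -/
noncomputable def sandW (M : ℝ) (i1 i2 i3 : Fin p → Fin m) :
    Sym2 (SandV m p) → ℝ := fun e =>
  if RootEdge e then 2
  else if PathEdge e then 1
  else if CrossEdge i1 i2 i3 e then M
  else 0

/-- The two colors: `C_1` consists of all clause nodes together with the `y_i^1, y_i^5`,
and `C_2` of all clause nodes together with the `y_i^3, y_i^7`. -/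
def sandC (q : Fin 2) : Finset (SandV m p) :=
  (Finset.univ.image kv) ∪
    (if q = 0 then
      Finset.univ.image (fun i => yv i 0) ∪ Finset.univ.image (fun i => yv i 4)
    else
      Finset.univ.image (fun i => yv i 2) ∪ Finset.univ.image (fun i => yv i 6))

/-- Finset of cost-`M` edges. -/
noncomputable def crossE (i1 i2 i3 : Fin p → Fin m) : Finset (Sym2 (SandV m p)) :=
  Finset.univ.filter (CrossEdge i1 i2 i3)

end SandSat

namespace FSand

/-- A routing associated with a capacity installation `x` of a two-color instance:
for each color `q` and each terminal `v` of color `q`, a path from `v` to the root, such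
that every edge lies on at most `x e` paths of each color. -/
structure AssocRouting {V : Type} [Fintype V] [DecidableEq V]
    (G : SimpleGraph V) (r : V) (C : Fin 2 → Finset V) (x : Sym2 V → ℕ) where
  P : (q : Fin 2) → (v : V) → v ∈ C q → G.Walk v r
  isPath : ∀ q v hv, (P q v hv).IsPath
  cap : ∀ q e, ((C q).attach.filter (fun v => e ∈ (P q v.1 v.2).edges)).card ≤ x e

variable {V : Type} [Fintype V] [DecidableEq V] {G : SimpleGraph V} {r : V}
  {C : Fin 2 → Finset V} {x : Sym2 V → ℕ}

/-- The dart `d` is used by the flow of color `q`. -/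
def AssocRouting.usedDart (R : AssocRouting G r C x) (q : Fin 2) (d : G.Dart) : Prop :=
  ∃ v, ∃ hv : v ∈ C q, d ∈ (R.P q v hv).darts

/-- The flow of color `q` induces no directed cycle: no closed walk of positive length
all of whose darts are used by the flow of color `q`. -/
def AssocRouting.NoDirCycle (R : AssocRouting G r C x) (q : Fin 2) : Prop :=
  ∀ (v : V) (c : G.Walk v v), 0 < c.length → ¬ ∀ d ∈ c.darts, R.usedDart q d

end FSand

namespace SandSat

/-- The nodes `y_i^1, y_i^3, y_i^5, y_i^7`. -/
def Yodd {m p : ℕ} : Finset (SandV m p) :=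
  Finset.univ.image (fun i => yv i 0) ∪ Finset.univ.image (fun i => yv i 2) ∪
    Finset.univ.image (fun i => yv i 4) ∪ Finset.univ.image (fun i => yv i 6)

end SandSat

namespace SandSat

open FSand

variable {m p : ℕ}

/-- Every clause node belongs to both colors. -/
lemma kv_mem_sandC (q : Fin 2) (j : Fin m) :
    (kv j : SandV m p) ∈ (sandC q : Finset (SandV m p)) :=
  Finset.mem_union_left _ (Finset.mem_image_of_mem _ (Finset.mem_univ j))

/-- The vertex set `{r, y_i^1, …, y_i^7}` of the induced subgraph `G_i`. -/
def Vi (i : Fin p) : Finset (SandV m p) :=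
  insert rt (Finset.univ.image (yv i))

/-- `χ_i`: total cost of the capacity installed on the edges of `G_i`. -/
noncomputable def chi (i1 i2 i3 : Fin p → Fin m) (M : ℝ)
    (x : Sym2 (SandV m p) → ℕ) (i : Fin p) : ℝ :=
  ∑ e ∈ Finset.univ.filter
      (fun e => e ∈ (sandG i1 i2 i3).edgeSet ∧ ∀ a ∈ e, a ∈ Vi i),
    sandW M i1 i2 i3 e * (x e : ℝ)

/-- `n_i`: the number of clause nodes `k_j` whose color-1 path uses an edge of `G_i`. -/
noncomputable def nCl (i1 i2 i3 : Fin p → Fin m) {x : Sym2 (SandV m p) → ℕ}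
    (R : AssocRouting (sandG i1 i2 i3) rt sandC x) (i : Fin p) : ℕ :=
  (Finset.univ.filter (fun j : Fin m =>
    ∃ e ∈ (R.P 0 (kv j) (kv_mem_sandC 0 j)).edges, ∀ a ∈ e, a ∈ Vi i)).card

/-- The variable `x_i` is in conflict: some clause node routes (both colors) on paths
whose shared first edge has endpoint `y_i^4`, while a different clause node routes on
paths whose shared first edge has endpoint `y_i^2` or `y_i^6`. -/
def InConflict (i1 i2 i3 : Fin p → Fin m) {x : Sym2 (SandV m p) → ℕ}
    (R : AssocRouting (sandG i1 i2 i3) rt sandC x) (i : Fin p) : Prop :=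
  ∃ j j' : Fin m, j ≠ j' ∧
    (∃ e, (R.P 0 (kv j) (kv_mem_sandC 0 j)).edges.head? = some e ∧
          (R.P 1 (kv j) (kv_mem_sandC 1 j)).edges.head? = some e ∧ yv i 3 ∈ e) ∧
    (∃ e', (R.P 0 (kv j') (kv_mem_sandC 0 j')).edges.head? = some e' ∧
           (R.P 1 (kv j') (kv_mem_sandC 1 j')).edges.head? = some e' ∧
           (yv i 1 ∈ e' ∨ yv i 5 ∈ e'))

end SandSat

/-!
Feasibility at the cut `{k_j}` and the cost bound leave exactly one unit of capacity on the
cost-`M` edges at each clause node. So every clause path starts on that one edge, which both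
colours share and no other path uses. A path meets only one of the nodes `y^1, y^3, y^5, y^7`,
so each of these terminals is joined to `r` by a single edge, and a clause path runs
`k_j → y_a^ℓ → y_a^w → r`, where `y_a^ℓ` is one of `y^2, y^4, y^6` and `y_a^w` is a neighbour
of it.

Count paths on the ten edges of `G_i`. A root edge carries its own terminal together with the
clause paths of that colour that leave there. A path edge carries the clause paths that use it.
The clause paths of the two colours enter `G_i` at the same nodes. These linear constraints bound
the weighted capacity from below by `8 + 2 n_i`. When clauses enter at `y^4` and also at `y^2`
or `y^6`, the bound goes up by one.
-/

namespace SimpleGraph.Walk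

variable {V : Type*} {G : SimpleGraph V} {u v : V}

lemma IsPath.edges_eq_singleton_of_penultimate_eq {P : G.Walk u v} (hP : P.IsPath)
    (huv : u ≠ v) (h : P.penultimate = u) : P.edges = [s(u, v)] := by
  have hnil : ¬ P.Nil := fun hn => huv hn.eq
  have hsnd := hP.eq_snd_of_mem_edges (h ▸ P.mk_penultimate_end_mem_edges hnil)
  cases P with
  | nil => exact absurd .nil hnil
  | cons hadj Q =>
    simp only [snd_cons] at hsnd
    subst hsnd
    cases isPath_iff_nil.mp ((cons_isPath_iff _ _).mp hP).1
    simp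

end SimpleGraph.Walk

lemma Finset.card_filter_and_comp_eq_sum_ite {ι β : Type*} [DecidableEq β] {s : Finset ι}
    {t : Finset β} {A : ι → Prop} [DecidablePred A] {f : ι → β} (hf : ∀ i ∈ s, A i → f i ∈ t)
    (P : β → Prop) [DecidablePred P] :
    #{i ∈ s | A i ∧ P (f i)} = ∑ b ∈ t, if P b then #{i ∈ s | A i ∧ f i = b} else 0 := by
  rw [Finset.card_eq_sum_card_fiberwise (f := f) (t := t)
    fun i hi => hf i (Finset.mem_filter.mp hi).1 (Finset.mem_filter.mp hi).2.1]
  refine Finset.sum_congr rfl fun b _ => ?_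
  split_ifs with hb
  · congr 1; ext i; simp only [Finset.mem_filter]; grind
  · rw [Finset.card_eq_zero, Finset.filter_eq_empty_iff]; grind

namespace SandSat

open FSand SimpleGraph

variable {m p : ℕ} {i1 i2 i3 : Fin p → Fin m}

@[simp] lemma yv_inj {a a' : Fin p} {b b' : Fin 7} :
    (yv a b : SandV m p) = yv a' b' ↔ a = a' ∧ b = b' := by
  simp [yv, Prod.ext_iff]

@[simp] lemma kv_inj {j j' : Fin m} : (kv j : SandV m p) = kv j' ↔ j = j' := by
  simp [kv]

@[simp] lemma kv_ne_rt (j : Fin m) : (kv j : SandV m p) ≠ rt := nofun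
@[simp] lemma rt_ne_kv (j : Fin m) : (rt : SandV m p) ≠ kv j := nofun
@[simp] lemma yv_ne_rt (a : Fin p) (b : Fin 7) : (yv a b : SandV m p) ≠ rt := nofun
@[simp] lemma rt_ne_yv (a : Fin p) (b : Fin 7) : (rt : SandV m p) ≠ yv a b := nofun
@[simp] lemma kv_ne_yv (j : Fin m) (a : Fin p) (b : Fin 7) : (kv j : SandV m p) ≠ yv a b := nofun
@[simp] lemma yv_ne_kv (j : Fin m) (a : Fin p) (b : Fin 7) : (yv a b : SandV m p) ≠ kv j := nofun

/-- The pairs `(ℓ, w)` (indices as in `yv`) such that `y^ℓ` is adjacent to a clause node and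
`y^w` is a neighbour of `y^ℓ` that is adjacent to the root. -/
def gadgetSteps : Finset (Fin 7 × Fin 7) := {(1, 0), (1, 2), (3, 2), (3, 4), (5, 4), (5, 6)}

lemma swap_notMem_gadgetSteps {st : Fin 7 × Fin 7} (hst : st ∈ gadgetSteps) :
    st.swap ∉ gadgetSteps := by
  revert st; decide

lemma mem_edgeSet_sandG {e : Sym2 (SandV m p)} :
    e ∈ (sandG i1 i2 i3).edgeSet ↔ RootEdge e ∨ PathEdge e ∨ CrossEdge i1 i2 i3 e := by
  rw [sandG, SimpleGraph.edgeSet_fromEdgeSet]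
  refine ⟨fun h => h.1, fun h => ⟨h, ?_⟩⟩
  rcases h with ⟨a, (rfl|rfl|rfl|rfl)⟩ | ⟨a, (rfl|rfl|rfl|rfl|rfl|rfl)⟩ | ⟨a, (rfl|rfl|rfl)⟩ <;>
    simp

lemma adj_sandG_iff {u v : SandV m p} :
    (sandG i1 i2 i3).Adj u v ↔
      RootEdge s(u, v) ∨ PathEdge s(u, v) ∨ CrossEdge i1 i2 i3 s(u, v) := by
  rw [← SimpleGraph.mem_edgeSet, mem_edgeSet_sandG]

lemma yv_mem_yodd {a : Fin p} {b : Fin 7} (hb : b = 0 ∨ b = 2 ∨ b = 4 ∨ b = 6) :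
    (yv a b : SandV m p) ∈ (Yodd : Finset (SandV m p)) := by
  rcases hb with rfl|rfl|rfl|rfl <;> simp [Yodd]

lemma rt_notMem_yodd : (rt : SandV m p) ∉ (Yodd : Finset (SandV m p)) := by
  simp [Yodd]

lemma mem_yodd_of_adj_rt {u : SandV m p} (h : (sandG i1 i2 i3).Adj u rt) :
    u ∈ (Yodd : Finset (SandV m p)) := by
  rcases adj_sandG_iff.mp h with ⟨a, h|h|h|h⟩ | ⟨a, h|h|h|h|h|h⟩ | ⟨a, h|h|h⟩ <;>
    simp at h <;> subst h <;> exact yv_mem_yodd (by decide)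

lemma exists_eq_yv_of_adj_kv {j : Fin m} {u : SandV m p} (h : (sandG i1 i2 i3).Adj (kv j) u) :
    ∃ a l, (l = 1 ∨ l = 3 ∨ l = 5) ∧ u = yv a l := by
  rcases adj_sandG_iff.mp h with ⟨a, h|h|h|h⟩ | ⟨a, h|h|h|h|h|h⟩ | ⟨a, h|h|h⟩ <;>
    simp at h <;> exact ⟨a, _, by decide, h.2⟩

lemma eq_kv_or_exists_mem_gadgetSteps_of_adj_yv {a : Fin p} {l : Fin 7}
    (hl : l = 1 ∨ l = 3 ∨ l = 5) {u : SandV m p} (h : (sandG i1 i2 i3).Adj (yv a l) u) :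
    (∃ j, u = kv j) ∨ ∃ v, (l, v) ∈ gadgetSteps ∧ u = yv a v := by
  rcases hl with rfl|rfl|rfl <;>
    rcases adj_sandG_iff.mp h with ⟨b, h|h|h|h⟩ | ⟨b, h|h|h|h|h|h⟩ | ⟨b, h|h|h⟩ <;>
    simp at h <;> simp [gadgetSteps, h]

lemma crossEdge_of_kv_mem {e : Sym2 (SandV m p)} (he : e ∈ (sandG i1 i2 i3).edgeSet)
    {j : Fin m} (hj : kv j ∈ e) : CrossEdge i1 i2 i3 e := by
  rcases mem_edgeSet_sandG.mp he with ⟨a, (rfl|rfl|rfl|rfl)⟩ | ⟨a, (rfl|rfl|rfl|rfl|rfl|rfl)⟩ |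
    hcross <;> simp_all

lemma card_filter_kv_mem_eq_one {e : Sym2 (SandV m p)} (he : CrossEdge i1 i2 i3 e) :
    #{j : Fin m | kv j ∈ e} = 1 := by
  rw [Finset.card_eq_one]
  rcases he with ⟨a, (rfl|rfl|rfl)⟩
  exacts [⟨i1 a, by ext; simp⟩, ⟨i3 a, by ext; simp⟩, ⟨i2 a, by ext; simp⟩]

lemma sandW_nonneg {M : ℝ} (hM : 0 ≤ M) (e : Sym2 (SandV m p)) : 0 ≤ sandW M i1 i2 i3 e := by
  unfold sandW; split_ifs <;> norm_num [hM]

lemma sandW_of_crossEdge {M : ℝ} {e : Sym2 (SandV m p)} (he : CrossEdge i1 i2 i3 e) :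
    sandW M i1 i2 i3 e = M := by
  obtain ⟨a, h | h | h⟩ := he <;>
    simp [sandW, RootEdge, PathEdge, CrossEdge, h]

def clauseRoute (j : Fin m) (a : Fin p) (l v : Fin 7) : List (Sym2 (SandV m p)) :=
  [s(kv j, yv a l), s(yv a l, yv a v), s(yv a v, rt)]

lemma eq_of_mem_support_of_card_inter_yodd_eq_one {u v : SandV m p}
    {W : (sandG i1 i2 i3).Walk u v} (hY : (W.support.toFinset ∩ Yodd).card = 1)
    {y y' : SandV m p} (hy : y ∈ W.support) (hyY : y ∈ Yodd) (hy' : y' ∈ W.support)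
    (hy'Y : y' ∈ Yodd) : y = y' :=
  Finset.card_le_one.mp hY.le _ (by simp [hy, hyY]) _ (by simp [hy', hy'Y])

lemma edges_eq_of_start_mem_yodd {y : SandV m p} (W : (sandG i1 i2 i3).Walk y rt)
    (hW : W.IsPath) (hy : y ∈ Yodd) (hY : ∀ u ∈ W.support, u ∈ Yodd → u = y) :
    W.edges = [s(y, rt)] := by
  have hne : y ≠ rt := fun h => rt_notMem_yodd (h ▸ hy)
  have hnil : ¬ W.Nil := fun hn => hne hn.eq
  exact hW.edges_eq_singleton_of_penultimate_eq hne
    (hY _ (W.getVert_mem_support _) (mem_yodd_of_adj_rt (Walk.adj_penultimate hnil)))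

lemma edges_eq_clauseRoute {j : Fin m} (W : (sandG i1 i2 i3).Walk (kv j) rt) (hW : W.IsPath)
    (hY : (W.support.toFinset ∩ Yodd).card = 1)
    (hcross : ∀ e ∈ W.edges, ∀ j', kv j' ∈ e → j' = j) :
    ∃ a l v, (l, v) ∈ gadgetSteps ∧ W.edges = clauseRoute j a l v := by
  cases W with
  | cons h1 W1 =>
    obtain ⟨a, l, hl, rfl⟩ := exists_eq_yv_of_adj_kv h1
    cases W1 with
    | cons h2 W2 =>
      have hW1 := (Walk.cons_isPath_iff _ _).mp hW
      rcases eq_kv_or_exists_mem_gadgetSteps_of_adj_yv hl h2 with ⟨j', rfl⟩ | ⟨v, hv, rfl⟩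
      · obtain rfl := hcross s(yv a l, kv j') (by simp) j' (Sym2.mem_mk_right _ _)
        exact absurd (by simp) hW1.2
      · have hvY : (yv a v : SandV m p) ∈ Yodd := by
          simp only [gadgetSteps, Finset.mem_insert, Finset.mem_singleton, Prod.mk.injEq] at hv
          exact yv_mem_yodd (by omega)
        have hW2 := edges_eq_of_start_mem_yodd W2 ((Walk.cons_isPath_iff _ _).mp hW1.1).1 hvY
          fun u hu huY =>
            eq_of_mem_support_of_card_inter_yodd_eq_one hY (by simp [hu]) huY (by simp) hvY
        exact ⟨a, l, v, hv, by simp [hW2, clauseRoute]⟩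

/-- The cost of `x` on the edges of `G_i`. -/
def gadgetWeight (x : Sym2 (SandV m p) → ℕ) (i : Fin p) : ℕ :=
  2 * (x s(yv i 0, rt) + x s(yv i 2, rt) + x s(yv i 4, rt) + x s(yv i 6, rt)) +
    ∑ st ∈ gadgetSteps, x s(yv i st.1, yv i st.2)

lemma gadgetWeight_le_chi {M : ℝ} (hM : 0 ≤ M) (x : Sym2 (SandV m p) → ℕ) (i : Fin p) :
    (gadgetWeight x i : ℝ) ≤ chi i1 i2 i3 M x i := by
  set T : Finset (Sym2 (SandV m p)) :=
    {s(yv i 0, rt), s(yv i 2, rt), s(yv i 4, rt), s(yv i 6, rt),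
     s(yv i 1, yv i 0), s(yv i 1, yv i 2), s(yv i 3, yv i 2),
     s(yv i 3, yv i 4), s(yv i 5, yv i 4), s(yv i 5, yv i 6)}
  have hT : T ⊆ Finset.univ.filter fun e =>
      e ∈ (sandG i1 i2 i3).edgeSet ∧ ∀ a ∈ e, a ∈ Vi i := by
    simp [T, Finset.insert_subset_iff, mem_edgeSet_sandG, RootEdge, PathEdge, Vi]
  have hweight : (gadgetWeight x i : ℝ) = ∑ e ∈ T, sandW M i1 i2 i3 e * x e := by
    simp only [T, gadgetWeight, gadgetSteps, sandW, RootEdge, PathEdge, Finset.mem_insert,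
      Finset.mem_singleton, Prod.mk.injEq, Fin.reduceEq, Fin.isValue, and_false, and_self, or_self,
      not_false_eq_true, Finset.sum_insert, and_true, Finset.sum_singleton, Nat.cast_add,
      Nat.cast_mul, Nat.cast_ofNat, Sym2.eq, Sym2.rel_iff', yv_inj, Prod.swap_prod_mk, yv_ne_rt,
      rt_ne_yv, zero_ne_one, false_or, or_false, exists_eq', ↓reduceIte, false_and, one_ne_zero,
      exists_false, one_mul]
    ring
  rw [hweight, chi]
  exact Finset.sum_le_sum_of_subset_of_nonneg hT
    fun e _ _ => mul_nonneg (sandW_nonneg hM e) (Nat.cast_nonneg _)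

noncomputable def crossCap (i1 i2 i3 : Fin p → Fin m) (x : Sym2 (SandV m p) → ℕ) (j : Fin m) :
    ℕ :=
  ∑ e ∈ (crossE i1 i2 i3).filter (kv j ∈ ·), x e

variable {x : Sym2 (SandV m p) → ℕ}

lemma one_le_crossCap (hfeas : Feasible (sandG i1 i2 i3) rt sandC x) (j : Fin m) :
    1 ≤ crossCap i1 i2 i3 x j := by
  have hcut := hfeas.2 {kv j} (by simp) 0
  rw [Finset.inter_singleton_of_mem (kv_mem_sandC 0 j), Finset.card_singleton] at hcut
  refine hcut.trans (Finset.sum_le_sum_of_ne_zero fun e he hx => ?_)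
  obtain ⟨-, u, v, rfl, hu, -⟩ := Finset.mem_filter.mp he
  rw [Finset.mem_singleton] at hu
  subst hu
  have hcross := crossEdge_of_kv_mem (not_not.mp (mt (hfeas.1 _) hx)) (Sym2.mem_mk_left _ _)
  simp [crossE, hcross]

lemma sum_crossCap : ∑ j, crossCap i1 i2 i3 x j = ∑ e ∈ crossE i1 i2 i3, x e := by
  simp only [crossCap, Finset.sum_filter]
  rw [Finset.sum_comm]
  refine Finset.sum_congr rfl fun e he => ?_
  rw [← Finset.sum_filter, Finset.sum_const, smul_eq_mul,
    card_filter_kv_mem_eq_one (Finset.mem_filter.mp he).2, one_mul]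

lemma sum_crossE_le {M : ℝ} (hM : 2 * (m : ℝ) + 8 * p < M)
    (hcost : instCost (sandW M i1 i2 i3) x ≤ (M + 2) * m + 8 * p) :
    ∑ e ∈ crossE i1 i2 i3, x e ≤ m := by
  have hM0 : 0 < M := lt_of_le_of_lt (by positivity) hM
  have hcross : M * ∑ e ∈ crossE i1 i2 i3, (x e : ℝ) ≤ instCost (sandW M i1 i2 i3) x := by
    rw [Finset.mul_sum, instCost]
    refine (Finset.sum_congr rfl fun e he => ?_).trans_le
      (Finset.sum_le_sum_of_subset_of_nonneg (Finset.subset_univ _)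
        fun e _ _ => mul_nonneg (sandW_nonneg hM0.le e) (Nat.cast_nonneg _))
    rw [sandW_of_crossEdge (Finset.mem_filter.mp he).2]
  have : (∑ e ∈ crossE i1 i2 i3, x e : ℝ) < m + 1 := by
    by_contra! h
    nlinarith
  exact_mod_cast Nat.lt_succ_iff.mp (by exact_mod_cast this)

/-- Every clause node is cut off from the root by its cost-`M` edges, and the cost bound leaves
room for only `m` units on them, so each clause gets exactly one. -/
lemma crossCap_eq_one {M : ℝ} (hM : 2 * (m : ℝ) + 8 * p < M)
    (hfeas : Feasible (sandG i1 i2 i3) rt sandC x)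
    (hcost : instCost (sandW M i1 i2 i3) x ≤ (M + 2) * m + 8 * p) (j : Fin m) :
    crossCap i1 i2 i3 x j = 1 := by
  have hle : ∀ j ∈ Finset.univ, 1 ≤ crossCap i1 i2 i3 x j := fun j _ => one_le_crossCap hfeas j
  have hsum : ∑ j : Fin m, crossCap i1 i2 i3 x j ≤ ∑ _j : Fin m, 1 := by
    simpa [sum_crossCap] using sum_crossE_le hM hcost
  exact ((Finset.sum_eq_sum_iff_of_le hle).mp
    (le_antisymm (Finset.sum_le_sum hle) hsum) j (Finset.mem_univ j)).symm

section Routing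

variable (R : AssocRouting (sandG i1 i2 i3) rt sandC x)

def OneYoddPerPath : Prop :=
  ∀ q v hv, ((R.P q v hv).support.toFinset ∩ Yodd).card = 1

def ClauseRoutes (a : Fin m → Fin p) (l : Fin m → Fin 7) (w : Fin 2 → Fin m → Fin 7) : Prop :=
  ∀ q j, (l j, w q j) ∈ gadgetSteps ∧
    (R.P q (kv j) (kv_mem_sandC q j)).edges = clauseRoute j (a j) (l j) (w q j)

noncomputable def clauseLoad (q : Fin 2) (e : Sym2 (SandV m p)) : ℕ :=
  #{j | e ∈ (R.P q (kv j) (kv_mem_sandC q j)).edges}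

lemma card_le_of_forall_mem_edges {q : Fin 2} {e : Sym2 (SandV m p)} {S : Finset (SandV m p)}
    (hS : ∀ v ∈ S, ∃ hv : v ∈ (sandC q : Finset (SandV m p)), e ∈ (R.P q v hv).edges) :
    #S ≤ x e := by
  refine le_trans (Finset.card_le_card fun v hv => ?_)
    ((Finset.card_image_le (f := Subtype.val)).trans (R.cap q e))
  obtain ⟨hvC, he⟩ := hS v hv
  exact Finset.mem_image.mpr ⟨⟨v, hvC⟩, by simp [he], rfl⟩

lemma one_le_of_mem_edges {q : Fin 2} {v : SandV m p} {hv : v ∈ (sandC q : Finset _)}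
    {e : Sym2 (SandV m p)} (he : e ∈ (R.P q v hv).edges) : 1 ≤ x e := by
  simpa using card_le_of_forall_mem_edges R (S := {v}) (by simpa using ⟨hv, he⟩)

lemma eq_of_mem_edges_of_le_one {q : Fin 2} {e : Sym2 (SandV m p)} (hx : x e ≤ 1)
    {v v' : SandV m p} {hv : v ∈ (sandC q : Finset _)} {hv' : v' ∈ (sandC q : Finset _)}
    (he : e ∈ (R.P q v hv).edges) (he' : e ∈ (R.P q v' hv').edges) : v = v' := by
  by_contra hne
  have := card_le_of_forall_mem_edges R (q := q) (e := e) (S := {v, v'}) (by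
    simp only [Finset.mem_insert, Finset.mem_singleton]
    rintro u (rfl | rfl)
    exacts [⟨hv, he⟩, ⟨hv', he'⟩])
  rw [Finset.card_pair hne] at this
  omega

lemma clauseLoad_le (q : Fin 2) (e : Sym2 (SandV m p)) : clauseLoad R q e ≤ x e := by
  rw [clauseLoad, ← Finset.card_image_of_injective _ (fun _ _ => kv_inj.mp)]
  refine card_le_of_forall_mem_edges R (q := q) fun v hv => ?_
  obtain ⟨j, hj, rfl⟩ := Finset.mem_image.mp hv
  exact ⟨kv_mem_sandC q j, (Finset.mem_filter.mp hj).2⟩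

variable {R}

lemma eq_of_crossEdge_of_one_le (hcap : ∀ j, crossCap i1 i2 i3 x j = 1) {j : Fin m}
    {e e' : Sym2 (SandV m p)} (he : e ∈ (sandG i1 i2 i3).edgeSet) (hj : kv j ∈ e)
    (he' : e' ∈ (sandG i1 i2 i3).edgeSet) (hj' : kv j ∈ e') (hx : 1 ≤ x e) (hx' : 1 ≤ x e') :
    e = e' := by
  by_contra hne
  have hsub : ({e, e'} : Finset _) ⊆ (crossE i1 i2 i3).filter (kv j ∈ ·) := by
    simp [Finset.insert_subset_iff, crossE, crossEdge_of_kv_mem he hj, crossEdge_of_kv_mem he' hj',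
      hj, hj']
  have := Finset.sum_le_sum_of_subset hsub (f := x)
  rw [Finset.sum_pair hne, ← crossCap, hcap j] at this
  omega

lemma le_one_of_crossEdge (hcap : ∀ j, crossCap i1 i2 i3 x j = 1) {j : Fin m}
    {e : Sym2 (SandV m p)} (he : e ∈ (sandG i1 i2 i3).edgeSet) (hj : kv j ∈ e) : x e ≤ 1 := by
  rw [← hcap j]
  exact Finset.single_le_sum (f := x) (fun _ _ => Nat.zero_le _)
    (by simp [crossE, crossEdge_of_kv_mem he hj, hj])

/-- The one unit of capacity at `k_j` sits on the first edge of `P_q^j`, so no other path of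
colour `q` can pass through it. -/
lemma eq_kv_of_mem_edges (hcap : ∀ j, crossCap i1 i2 i3 x j = 1) {q : Fin 2} {v : SandV m p}
    {hv : v ∈ (sandC q : Finset _)} {e : Sym2 (SandV m p)} (he : e ∈ (R.P q v hv).edges)
    {j : Fin m} (hj : kv j ∈ e) : v = kv j := by
  have he₀ := Walk.edges_subset_edgeSet _ he
  have hfirst := (R.P q (kv j) (kv_mem_sandC q j)).mk_start_snd_mem_edges
    fun hn => kv_ne_rt j hn.eq
  have := eq_of_crossEdge_of_one_le hcap he₀ hj (Walk.edges_subset_edgeSet _ hfirst)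
    (Sym2.mem_mk_left _ _) (one_le_of_mem_edges R he) (one_le_of_mem_edges R hfirst)
  exact eq_of_mem_edges_of_le_one R (le_one_of_crossEdge hcap he₀ hj) he (this ▸ hfirst)

lemma edges_eq_of_yv_mem_sandC (hY : OneYoddPerPath R) {q : Fin 2} {a : Fin p} {b : Fin 7}
    (hb : b = 0 ∨ b = 2 ∨ b = 4 ∨ b = 6) (hv : yv a b ∈ (sandC q : Finset (SandV m p))) :
    (R.P q (yv a b) hv).edges = [s(yv a b, rt)] :=
  edges_eq_of_start_mem_yodd _ (R.isPath q _ hv) (yv_mem_yodd hb) fun _ hu huY =>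
    eq_of_mem_support_of_card_inter_yodd_eq_one (hY q _ hv) hu huY (Walk.start_mem_support _)
      (yv_mem_yodd hb)

lemma exists_clauseRoutes (hY : OneYoddPerPath R) (hcap : ∀ j, crossCap i1 i2 i3 x j = 1) :
    ∃ a l w, ClauseRoutes R a l w := by
  have hroute q j := edges_eq_clauseRoute _ (R.isPath q _ (kv_mem_sandC q j)) (hY q _ _)
    fun e he j' hj' => (kv_inj.mp (eq_kv_of_mem_edges hcap he hj')).symm
  choose a l w hstep hedges using hroute
  have hfirst (q : Fin 2) (j : Fin m) :
      s(kv j, yv (a q j) (l q j)) ∈ (R.P q (kv j) (kv_mem_sandC q j)).edges := by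
    simp [hedges, clauseRoute]
  have hsame (j : Fin m) : a 1 j = a 0 j ∧ l 1 j = l 0 j := by
    simpa using eq_of_crossEdge_of_one_le hcap
      (Walk.edges_subset_edgeSet _ (hfirst 1 j)) (Sym2.mem_mk_left _ _)
      (Walk.edges_subset_edgeSet _ (hfirst 0 j)) (Sym2.mem_mk_left _ _)
      (one_le_of_mem_edges R (hfirst 1 j)) (one_le_of_mem_edges R (hfirst 0 j))
  refine ⟨a 0, l 0, w, fun q j => ?_⟩
  fin_cases q
  · exact ⟨hstep 0 j, hedges 0 j⟩
  · simpa [(hsame j).1, (hsame j).2] using And.intro (hstep 1 j) (hedges 1 j)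

lemma one_add_clauseLoad_le (hY : OneYoddPerPath R) {q : Fin 2} {a : Fin p} {b : Fin 7}
    (hb : b = 0 ∨ b = 2 ∨ b = 4 ∨ b = 6) (hv : yv a b ∈ (sandC q : Finset (SandV m p))) :
    1 + clauseLoad R q s(yv a b, rt) ≤ x s(yv a b, rt) := by
  rw [clauseLoad, ← Finset.card_image_of_injective _ (fun _ _ => kv_inj.mp), add_comm,
    ← Finset.card_insert_of_notMem (a := yv a b) (by simp)]
  refine card_le_of_forall_mem_edges R (q := q) fun v hv' => ?_
  rcases Finset.mem_insert.mp hv' with rfl | hv'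
  · exact ⟨hv, by simp [edges_eq_of_yv_mem_sandC hY hb hv]⟩
  · obtain ⟨j, hj, rfl⟩ := Finset.mem_image.mp hv'
    exact ⟨kv_mem_sandC q j, (Finset.mem_filter.mp hj).2⟩

variable {a : Fin m → Fin p} {l : Fin m → Fin 7} {w : Fin 2 → Fin m → Fin 7}

lemma clauseLoad_root_eq
    (hroute : ClauseRoutes R a l w)
    (q : Fin 2) (i : Fin p) (b : Fin 7) :
    clauseLoad R q s(yv i b, rt) = #{j | a j = i ∧ w q j = b} := by
  unfold clauseLoad
  congr 1
  refine Finset.filter_congr fun j _ => ?_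
  simp [(hroute _ _).2, clauseRoute, eq_comm]

lemma clauseLoad_step_eq
    (hroute : ClauseRoutes R a l w)
    (q : Fin 2) (i : Fin p) {st : Fin 7 × Fin 7} (hst : st ∈ gadgetSteps) :
    clauseLoad R q s(yv i st.1, yv i st.2) = #{j | a j = i ∧ (l j, w q j) = st} := by
  unfold clauseLoad
  congr 1
  refine Finset.filter_congr fun j _ => ?_
  obtain ⟨s₁, s₂⟩ := st
  obtain ⟨hstep, hedges⟩ := hroute q j
  simp only [hedges, clauseRoute, List.mem_cons, Sym2.eq, Sym2.rel_iff', Prod.mk.injEq, yv_ne_kv,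
    yv_inj, false_and, Prod.swap_prod_mk, and_false, or_self, yv_ne_rt, List.not_mem_nil,
    or_false, false_or]
  constructor
  · rintro (⟨⟨rfl, rfl⟩, -, rfl⟩ | ⟨⟨rfl, rfl⟩, -, rfl⟩)
    · exact ⟨rfl, rfl, rfl⟩
    · exact absurd hstep (swap_notMem_gadgetSteps hst)
  · rintro ⟨rfl, rfl, rfl⟩
    simp

lemma nCl_eq_card
    (hroute : ClauseRoutes R a l w)
    (i : Fin p) : nCl i1 i2 i3 R i = #{j | a j = i} := by
  unfold nCl
  congr 1
  refine Finset.filter_congr fun j _ => ?_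
  simp [(hroute _ _).2, clauseRoute, Vi, eq_comm]

lemma InConflict.one_le_card_entries
    (hroute : ClauseRoutes R a l w)
    {i : Fin p} (h : InConflict i1 i2 i3 R i) :
    1 ≤ #{j | a j = i ∧ l j = 3} ∧
      (1 ≤ #{j | a j = i ∧ l j = 1} ∨ 1 ≤ #{j | a j = i ∧ l j = 5}) := by
  obtain ⟨j, j', -, ⟨e, he, -, hy⟩, ⟨e', he', -, hy'⟩⟩ := h
  simp only [(hroute _ _).2, clauseRoute, List.head?_cons, Option.some.injEq] at he he'
  subst he he'
  simp only [Sym2.mem_iff, yv_ne_kv, yv_inj, false_or] at hy hy'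
  refine ⟨Finset.card_pos.mpr ⟨j, by simp [hy.1, hy.2]⟩, ?_⟩
  rcases hy' with hy' | hy'
  exacts [.inl (Finset.card_pos.mpr ⟨j', by simp [hy'.1, hy'.2]⟩),
    .inr (Finset.card_pos.mpr ⟨j', by simp [hy'.1, hy'.2]⟩)]

lemma le_gadgetWeight (hY : OneYoddPerPath R) (hroute : ClauseRoutes R a l w) (i : Fin p) :
    8 + 2 * nCl i1 i2 i3 R i ≤ gadgetWeight x i ∧
      (InConflict i1 i2 i3 R i → 9 + 2 * nCl i1 i2 i3 R i ≤ gadgetWeight x i) := by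
  set N : Fin 2 → Fin 7 × Fin 7 → ℕ := fun q st => #{j | a j = i ∧ (l j, w q j) = st}
  have hcount (q : Fin 2) (P : Fin 7 × Fin 7 → Prop) [DecidablePred P] :
      #{j | a j = i ∧ P (l j, w q j)} = ∑ st ∈ gadgetSteps, if P st then N q st else 0 :=
    Finset.card_filter_and_comp_eq_sum_ite (fun j _ _ => (hroute q j).1) P
  have hroot (q : Fin 2) (b : Fin 7) : clauseLoad R q s(yv i b, rt) =
      ∑ st ∈ gadgetSteps, if st.2 = b then N q st else 0 :=
    (clauseLoad_root_eq hroute q i b).trans (hcount q (·.2 = b))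
  have hpath (q : Fin 2) (st) (hst : st ∈ gadgetSteps) : N q st ≤ x s(yv i st.1, yv i st.2) :=
    (clauseLoad_step_eq hroute q i hst).symm.trans_le (clauseLoad_le R q _)
  have hentry (q : Fin 2) (k : Fin 7) :
      #{j | a j = i ∧ l j = k} = ∑ st ∈ gadgetSteps, if st.1 = k then N q st else 0 :=
    hcount q (·.1 = k)
  have hn : nCl i1 i2 i3 R i = ∑ st ∈ gadgetSteps, N 0 st := by
    simpa [nCl_eq_card hroute] using hcount 0 fun _ => True
  have h0 := one_add_clauseLoad_le hY (q := 0) (a := i) (b := 0) (by decide) (by simp [sandC])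
  have h2 := one_add_clauseLoad_le hY (q := 1) (a := i) (b := 2) (by decide) (by simp [sandC])
  have h4 := one_add_clauseLoad_le hY (q := 0) (a := i) (b := 4) (by decide) (by simp [sandC])
  have h6 := one_add_clauseLoad_le hY (q := 1) (a := i) (b := 6) (by decide) (by simp [sandC])
  -- Only the strict bound needs these: if no clause path uses the root edge of its own colour,
  -- the clauses in conflict send two paths of one colour to the root edge at `y^3` or at `y^5`.
  have h2' := clauseLoad_le R 0 s(yv i 2, rt)
  have h4' := clauseLoad_le R 1 s(yv i 4, rt)
  simp only [hroot] at h0 h2 h4 h6 h2' h4'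
  have hconf := fun hc : InConflict i1 i2 i3 R i => hc.one_le_card_entries hroute
  have h1 := (hentry 0 1).symm.trans (hentry 1 1)
  have h3 := (hentry 0 3).symm.trans (hentry 1 3)
  have h5 := (hentry 0 5).symm.trans (hentry 1 5)
  simp only [hentry 0] at hconf
  rw [hn, gadgetWeight]
  simp only [gadgetSteps, Finset.mem_insert, Finset.mem_singleton, forall_eq_or_imp, forall_eq,
    Fin.forall_fin_two] at hpath
  simp only [gadgetSteps, Finset.mem_insert, Finset.mem_singleton, Prod.mk.injEq, Fin.reduceEq,
    and_false, and_self, or_self, not_false_eq_true, Finset.sum_insert, ↓reduceIte, and_true,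
    Finset.sum_singleton, add_zero, zero_add] at h0 h2 h4 h6 h2' h4' h1 h3 h5 hconf ⊢
  obtain ⟨⟨_, _, _, _, _, _⟩, _, _, _, _, _, _⟩ := hpath
  refine ⟨by linarith, fun hc => ?_⟩
  obtain ⟨_, h | h⟩ := hconf hc <;> linarith

end Routing

end SandSat

open FSand SandSat in
theorem stmt_10_general {m p : ℕ} (i1 i2 i3 : Fin p → Fin m)
    (M : ℝ) (hM : 2 * (m : ℝ) + 8 * p < M)
    (x : Sym2 (SandV m p) → ℕ)
    (hfeas : Feasible (sandG i1 i2 i3) rt sandC x)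
    (hcost : instCost (sandW M i1 i2 i3) x ≤ (M + 2) * m + 8 * p)
    (R : AssocRouting (sandG i1 i2 i3) rt sandC x)
    (honeY : ∀ q v hv, ((R.P q v hv).support.toFinset ∩ Yodd).card = 1)
    (i : Fin p) :
    (8 : ℝ) + 2 * (nCl i1 i2 i3 R i : ℝ) ≤ chi i1 i2 i3 M x i ∧
    (InConflict i1 i2 i3 R i →
      (8 : ℝ) + 2 * (nCl i1 i2 i3 R i : ℝ) < chi i1 i2 i3 M x i) := by
  obtain ⟨a, l, w, hroute⟩ := exists_clauseRoutes honeY (crossCap_eq_one hM hfeas hcost)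
  obtain ⟨hle, hlt⟩ := le_gadgetWeight honeY hroute i
  have hchi : (gadgetWeight x i : ℝ) ≤ chi i1 i2 i3 M x i :=
    gadgetWeight_le_chi (lt_of_le_of_lt (by positivity) hM).le x i
  refine ⟨le_trans (by exact_mod_cast hle) hchi, fun hc => lt_of_lt_of_le ?_ hchi⟩
  have := hlt hc
  exact_mod_cast (by omega : 8 + 2 * nCl i1 i2 i3 R i < gadgetWeight x i)

open FSand SandSat in
/-- for an optimal installation of cost at most `(M+2)·m + 8p` with an
associated routing inducing no directed cycles and visiting exactly one node of
`∪_i {y_i^1, y_i^3, y_i^5, y_i^7}` per terminal path, each subgraph `G_i` satisfies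
`χ_i ≥ 8 + 2·n_i`, strictly when the variable `x_i` is in conflict. -/
theorem stmt_10 {m p : ℕ} (i1 i2 i3 : Fin p → Fin m)
    (hocc : ∀ i, i1 i ≠ i2 i ∧ i1 i ≠ i3 i ∧ i2 i ≠ i3 i)
    (M : ℝ) (hM : 2 * (m : ℝ) + 8 * p < M)
    (x : Sym2 (SandV m p) → ℕ)
    (hfeas : Feasible (sandG i1 i2 i3) rt sandC x)
    (hopt : ∀ x' : Sym2 (SandV m p) → ℕ, Feasible (sandG i1 i2 i3) rt sandC x' →
      instCost (sandW M i1 i2 i3) x ≤ instCost (sandW M i1 i2 i3) x')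
    (hcost : instCost (sandW M i1 i2 i3) x ≤ (M + 2) * m + 8 * p)
    (R : AssocRouting (sandG i1 i2 i3) rt sandC x)
    (hnocyc : ∀ q, R.NoDirCycle q)
    (honeY : ∀ q v hv, ((R.P q v hv).support.toFinset ∩ Yodd).card = 1)
    (i : Fin p) :
    (8 : ℝ) + 2 * (nCl i1 i2 i3 R i : ℝ) ≤ chi i1 i2 i3 M x i ∧
    (InConflict i1 i2 i3 R i →
      (8 : ℝ) + 2 * (nCl i1 i2 i3 R i : ℝ) < chi i1 i2 i3 M x i) :=
  stmt_10_general i1 i2 i3 M hM x hfeas hcost R honeY i
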